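/- arXiv:2205.14093 — 3 statements merged into one kernel-verified Lean document; each statement's English description precedes it below -/
import Mathlib

section
/- Let r be a skew-symmetric 3×3 real matrix, K ∈ ℝ³ with r·K = 0 and K ≠ 0, and define the vector field ξ(x) = r·x + 2⟨K,x⟩·x − ‖x‖²·K on ℝ³. Then the origin is an isolated zero of ξ: there exists ε > 0 such that ξ(x) ≠ 0 for all x with 0 < ‖x‖ < ε. -/
open Matrix
open scoped RealInnerProductSpace

section ConformalField

variable {E : Type*} [NormedAddCommGroup E] [InnerProductSpace ℝ E]

/-- `A` plays the role of the rotation part `r` and `K` of the special conformal part. -/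
def conformalField (A : E → E) (K x : E) : E :=
  A x + (2 * ⟪K, x⟫) • x - ‖x‖ ^ 2 • K

/-- Pairing the field with `x` leaves `⟪K, x⟫ ‖x‖²`, so `x ⟂ K` at a zero; pairing it with `K`
then leaves `-‖x‖² ‖K‖²`. -/
theorem conformalField_ne_zero {A : E → E} (hA : ∀ x y, ⟪A x, y⟫ = -⟪x, A y⟫) {K : E}
    (hAK : A K = 0) (hK : K ≠ 0) {x : E} (hx : x ≠ 0) : conformalField A K x ≠ 0 := by
  intro hξ
  have hAxx : ⟪A x, x⟫ = 0 := by linarith [hA x x, real_inner_comm x (A x)]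
  have hKAx : ⟪K, A x⟫ = 0 := by rw [← neg_eq_zero, ← hA, hAK, inner_zero_left]
  have hx2 : 0 < ‖x‖ ^ 2 := by positivity
  have hK2 : 0 < ‖K‖ ^ 2 := by positivity
  have along_x := congrArg (⟪·, x⟫) hξ
  have along_K := congrArg (⟪K, ·⟫) hξ
  simp only [conformalField, inner_sub_left, inner_add_left, inner_smul_left, inner_sub_right,
    inner_add_right, inner_smul_right, real_inner_self_eq_norm_sq, hAxx, hKAx, inner_zero_left,
    inner_zero_right, RCLike.conj_to_real] at along_x along_K
  have hKx : ⟪K, x⟫ = 0 := by nlinarith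
  rw [hKx] at along_K
  nlinarith

end ConformalField

theorem Matrix.inner_toEuclideanLin_of_transpose_eq_neg {n : Type*} [Fintype n] [DecidableEq n]
    {r : Matrix n n ℝ} (hr : rᵀ = -r) (x y : EuclideanSpace ℝ n) :
    ⟪r.toEuclideanLin x, y⟫ = -⟪x, r.toEuclideanLin y⟫ := by
  rw [← LinearMap.adjoint_inner_right, ← toEuclideanLin_conjTranspose_eq_adjoint,
    conjTranspose_eq_transpose_of_trivial, hr, map_neg, LinearMap.neg_apply, inner_neg_right]

/-- The origin is an isolated zero of the essential conformal Killing field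
`ξ(x) = r·x + 2⟨K,x⟩x − ‖x‖²K` (with `r` skew-symmetric, `r·K = 0`, `K ≠ 0`). -/
theorem stmt3 (r : Matrix (Fin 3) (Fin 3) ℝ) (hr : rᵀ = -r)
    (K : EuclideanSpace ℝ (Fin 3)) (hK : K ≠ 0)
    (hrK : ∀ i, ∑ j, r i j * K j = 0) :
    ∃ ε > (0 : ℝ), ∀ x : EuclideanSpace ℝ (Fin 3), 0 < ‖x‖ → ‖x‖ < ε →
      (fun i => (∑ j, r i j * x j) + 2 * ⟪K, x⟫ * x i - ‖x‖ ^ 2 * K i) ≠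
        (fun _ => 0 : Fin 3 → ℝ) := by
  refine ⟨1, one_pos, fun x hx _ h => ?_⟩
  have hrK' : r.toEuclideanLin K = 0 := by
    ext i
    simpa [toEuclideanLin, toLpLin_apply, mulVec, dotProduct] using hrK i
  refine conformalField_ne_zero (r.inner_toEuclideanLin_of_transpose_eq_neg hr) hrK' hK
    (norm_pos_iff.mp hx) ?_
  ext i
  simpa [conformalField, toEuclideanLin, toLpLin_apply, mulVec, dotProduct] using congrFun h i
end

section
/- The Euclidean Lie algebra e(3) = so(3) ⋉ ℝ³ (infinitesimal isometries of flat ℝ³) has no Lie subalgebra of dimension 5. -/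
open Matrix

attribute [local instance] LieRing.ofAssociativeRing

/-- Membership in the image of `e(3) = so(3) ⋉ ℝ³` inside `gl(4,ℝ)`:
matrices `[[r, p],[0, 0]]` with `r` skew-symmetric (affine vector fields
`x ↦ p + r·x`). -/
def inE3 (M : Matrix (Fin 4) (Fin 4) ℝ) : Prop :=
  (∀ j, M 3 j = 0) ∧ ∀ i j : Fin 4, i ≠ 3 → j ≠ 3 → M i j = - M j i

/-- The Euclidean Lie algebra `e(3) = so(3) ⋉ ℝ³` realized as a Lie subalgebra of
`gl(4,ℝ)`. -/
def e3 : LieSubalgebra ℝ (Matrix (Fin 4) (Fin 4) ℝ) where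
  carrier := {M | inE3 M}
  add_mem' := by
    rintro A B ⟨hA1, hA2⟩ ⟨hB1, hB2⟩
    refine ⟨fun j => ?_, fun i j hi hj => ?_⟩
    · simp [Matrix.add_apply, hA1 j, hB1 j]
    · simp only [Matrix.add_apply]
      rw [hA2 i j hi hj, hB2 i j hi hj]; ring
  zero_mem' := by
    refine ⟨fun j => rfl, fun i j _ _ => by simp⟩
  smul_mem' := by
    rintro c A ⟨hA1, hA2⟩
    refine ⟨fun j => by simp [hA1 j], fun i j hi hj => ?_⟩
    simp only [Matrix.smul_apply, smul_eq_mul]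
    rw [hA2 i j hi hj]; ring
  lie_mem' := by
    rintro A B ⟨hA1, hA2⟩ ⟨hB1, hB2⟩
    show inE3 ⁅A, B⁆
    constructor
    · intro j
      simp [Ring.lie_def, Matrix.sub_apply, Matrix.mul_apply, hA1, hB1]
    · intro i j hi hj
      have key : ∀ k : Fin 4,
          A i k * B k j - B i k * A k j = -(A j k * B k i - B j k * A k i) := by
        intro k
        by_cases hk : k = 3
        · subst hk
          rw [hA1 j, hA1 i, hB1 j, hB1 i]; ring
        · rw [hA2 i k hi hk, hA2 j k hj hk, hB2 i k hi hk, hB2 j k hj hk]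
          ring
      simp only [Ring.lie_def, Matrix.sub_apply, Matrix.mul_apply]
      calc (∑ k, A i k * B k j) - ∑ k, B i k * A k j
          = ∑ k, (A i k * B k j - B i k * A k j) := by
            rw [Finset.sum_sub_distrib]
        _ = ∑ k, -(A j k * B k i - B j k * A k i) :=
            Finset.sum_congr rfl fun k _ => key k
        _ = -((∑ k, A j k * B k i) - ∑ k, B j k * A k i) := by
            rw [← Finset.sum_sub_distrib, Finset.sum_neg_distrib]


/-!
A 5-dimensional subalgebra is the kernel of a nonzero linear form `(ω, v) ↦ a ⬝ ω + b ⬝ v`, in the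
coordinates in which `(ω, v)` is the vector field `x ↦ ω ⨯₃ x + v`. After adding a multiple of `b`
to its translation part, any rotation `ω` lies in the kernel, and its bracket with a translation
`(0, u)` in the kernel is `(0, ω ⨯₃ u)`. With `u = b ⨯₃ e` and `ω = b ⨯₃ u` this gives
`b ⬝ (ω ⨯₃ u) = -|b ⨯₃ u|² = 0` for every `e`, which forces `b = 0`. The kernel then contains the
rotations orthogonal to `a`, among them `u = a ⨯₃ e` and `a ⨯₃ u`; since
`a ⬝ (u ⨯₃ (a ⨯₃ u)) = |a ⨯₃ u|²`, this forces `a = 0` in the same way.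
-/

theorem Submodule.exists_dual_ker_eq_of_finrank_add_one {K V : Type*} [Field K] [AddCommGroup V]
    [Module K V] [FiniteDimensional K V] (p : Submodule K V)
    (hp : Module.finrank K p + 1 = Module.finrank K V) :
    ∃ f : Module.Dual K V, f ≠ 0 ∧ LinearMap.ker f = p := by
  have hp_lt : p < ⊤ := lt_top_iff_ne_top.mpr fun h => by
    rw [h, finrank_top] at hp; omega
  obtain ⟨f, hf, hmap⟩ := p.exists_dual_map_eq_bot_of_lt_top hp_lt inferInstance
  have hker : LinearMap.ker f ≠ ⊤ := mt LinearMap.ker_eq_top.mp hf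
  refine ⟨f, hf, (Submodule.eq_of_le_of_finrank_le (LinearMap.le_ker_iff_map.mpr hmap) ?_).symm⟩
  have := Submodule.finrank_lt hker
  omega

theorem dotProduct_cross_cross_self {R : Type*} [CommRing R] (a u : Fin 3 → R) :
    a ⬝ᵥ u ⨯₃ (a ⨯₃ u) = (a ⨯₃ u) ⬝ᵥ (a ⨯₃ u) := by
  rw [triple_product_permutation, triple_product_permutation]

theorem eq_zero_of_forall_cross_cross_self_eq_zero {R : Type*} [CommRing R] [LinearOrder R]
    [IsStrictOrderedRing R] {a : Fin 3 → R} (h : ∀ e, a ⨯₃ (a ⨯₃ e) = 0) : a = 0 := by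
  have h0 : -(a 1 * a 1) - a 2 * a 2 = 0 := by
    simpa [cross_apply] using congrFun (h (Pi.single 0 1)) 0
  have h1 : -(a 2 * a 2) - a 0 * a 0 = 0 := by
    simpa [cross_apply] using congrFun (h (Pi.single 1 1)) 1
  ext i
  fin_cases i <;> simp <;> nlinarith

theorem eq_zero_of_cross_mem_orthogonal {R : Type*} [CommRing R] [LinearOrder R]
    [IsStrictOrderedRing R] {a : Fin 3 → R}
    (h : ∀ u w, a ⬝ᵥ u = 0 → a ⬝ᵥ w = 0 → a ⬝ᵥ u ⨯₃ w = 0) : a = 0 := by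
  refine eq_zero_of_forall_cross_cross_self_eq_zero fun e => ?_
  have := h (a ⨯₃ e) (a ⨯₃ (a ⨯₃ e)) (dot_self_cross _ _) (dot_self_cross _ _)
  rwa [dotProduct_cross_cross_self, dotProduct_self_eq_zero] at this

/-- The bracket of `e(3)` in the coordinates `(ω, v)` of the vector field `x ↦ ω ⨯₃ x + v`. -/
def e3Bracket {R : Type*} [CommRing R] (x y : (Fin 3 → R) × (Fin 3 → R)) :
    (Fin 3 → R) × (Fin 3 → R) :=
  (x.1 ⨯₃ y.1, x.1 ⨯₃ y.2 - y.1 ⨯₃ x.2)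

section OrderedField

variable {R : Type*} [Field R] [LinearOrder R] [IsStrictOrderedRing R]

theorem eq_zero_of_e3Bracket_closed {a b : Fin 3 → R}
    (h : ∀ x y : (Fin 3 → R) × (Fin 3 → R), a ⬝ᵥ x.1 + b ⬝ᵥ x.2 = 0 →
      a ⬝ᵥ y.1 + b ⬝ᵥ y.2 = 0 → a ⬝ᵥ (e3Bracket x y).1 + b ⬝ᵥ (e3Bracket x y).2 = 0) :
    a = 0 ∧ b = 0 := by
  obtain rfl : b = 0 := by
    by_contra hb
    have hbb : b ⬝ᵥ b ≠ 0 := mt dotProduct_self_eq_zero.mp hb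
    refine hb (eq_zero_of_forall_cross_cross_self_eq_zero fun e => ?_)
    set u := b ⨯₃ e
    set ω := b ⨯₃ u
    have := h (ω, -(a ⬝ᵥ ω / b ⬝ᵥ b) • b) (0, u)
      (by rw [dotProduct_smul, smul_eq_mul, neg_mul, div_mul_cancel₀ _ hbb, add_neg_cancel])
      (by simp [u, dot_self_cross])
    simp only [e3Bracket, map_zero, LinearMap.zero_apply, dotProduct_zero, sub_zero,
      zero_add] at this
    rwa [← cross_anticomm, dotProduct_neg, dotProduct_cross_cross_self, neg_eq_zero,
      dotProduct_self_eq_zero] at this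
  refine ⟨eq_zero_of_cross_mem_orthogonal fun u w hu hw => ?_, rfl⟩
  simpa [e3Bracket] using h (u, 0) (w, 0) (by simpa) (by simpa)

theorem eq_zero_of_e3Bracket_mem_ker (f : Module.Dual R ((Fin 3 → R) × (Fin 3 → R)))
    (h : ∀ x y, f x = 0 → f y = 0 → f (e3Bracket x y) = 0) : f = 0 := by
  set a := (dotProductEquiv R (Fin 3)).symm (f ∘ₗ LinearMap.inl R _ _)
  set b := (dotProductEquiv R (Fin 3)).symm (f ∘ₗ LinearMap.inr R _ _)
  have hf (x : (Fin 3 → R) × (Fin 3 → R)) : f x = a ⬝ᵥ x.1 + b ⬝ᵥ x.2 := by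
    rw [← dotProductEquiv_apply_apply, ← dotProductEquiv_apply_apply,
      LinearEquiv.apply_symm_apply, LinearEquiv.apply_symm_apply, LinearMap.comp_apply,
      LinearMap.comp_apply, ← map_add]
    simp
  obtain ⟨ha, hb⟩ := eq_zero_of_e3Bracket_closed (a := a) (b := b) fun x y hx hy => by
    rw [← hf] at hx hy ⊢
    exact h x y hx hy
  ext x <;> simp [hf, ha, hb]

end OrderedField

def toE3Matrix : (Fin 3 → ℝ) × (Fin 3 → ℝ) →ₗ[ℝ] Matrix (Fin 4) (Fin 4) ℝ where
  toFun x :=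
    !![0, -x.1 2, x.1 1, x.2 0; x.1 2, 0, -x.1 0, x.2 1; -x.1 1, x.1 0, 0, x.2 2; 0, 0, 0, 0]
  map_add' x y := by
    ext i j; fin_cases i <;> fin_cases j <;> simp [add_comm]
  map_smul' c x := by
    ext i j; fin_cases i <;> fin_cases j <;> simp

def e3Coords (M : Matrix (Fin 4) (Fin 4) ℝ) : (Fin 3 → ℝ) × (Fin 3 → ℝ) :=
  (![M 2 1, M 0 2, M 1 0], ![M 0 3, M 1 3, M 2 3])

theorem toE3Matrix_injective : Function.Injective toE3Matrix :=
  Function.LeftInverse.injective (g := e3Coords) fun x => by ext i <;> fin_cases i <;> rfl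

theorem toE3Matrix_e3Coords {M : Matrix (Fin 4) (Fin 4) ℝ} (hM : inE3 M) :
    toE3Matrix (e3Coords M) = M := by
  obtain ⟨hrow, hskew⟩ := hM
  have hskew' (i j : Fin 3) :=
    hskew i.castSucc j.castSucc (Fin.castSucc_ne_last i) (Fin.castSucc_ne_last j)
  simp only [Fin.forall_fin_succ, Fin.isValue, Fin.castSucc_zero, Fin.castSucc_succ,
    Fin.succ_zero_eq_one, Fin.succ_one_eq_two, IsEmpty.forall_iff, and_true] at hskew'
  ext i j
  fin_cases i <;> fin_cases j <;> simp [toE3Matrix, e3Coords, hrow] <;> linarith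

theorem inE3_toE3Matrix (x : (Fin 3 → ℝ) × (Fin 3 → ℝ)) : inE3 (toE3Matrix x) := by
  refine ⟨fun j => ?_, fun i j hi hj => ?_⟩
  · fin_cases j <;> rfl
  · fin_cases i <;> fin_cases j <;> simp_all [toE3Matrix]

theorem range_toE3Matrix : LinearMap.range toE3Matrix = e3.toSubmodule := by
  ext M
  exact ⟨by rintro ⟨x, rfl⟩; exact inE3_toE3Matrix x,
    fun hM => ⟨e3Coords M, toE3Matrix_e3Coords hM⟩⟩

theorem lie_toE3Matrix (x y : (Fin 3 → ℝ) × (Fin 3 → ℝ)) :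
    ⁅toE3Matrix x, toE3Matrix y⁆ = toE3Matrix (e3Bracket x y) := by
  ext i j
  fin_cases i <;> fin_cases j <;>
    simp [toE3Matrix, e3Bracket, Ring.lie_def, cross_apply] <;> ring

/-- The Euclidean Lie algebra `e(3)` has no Lie subalgebra of dimension `5`. -/
theorem stmt9 (h : LieSubalgebra ℝ (Matrix (Fin 4) (Fin 4) ℝ)) (hsub : h ≤ e3) :
    Module.finrank ℝ ↥h ≠ 5 := by
  intro h5
  set K := h.toSubmodule.comap toE3Matrix
  have hK : Module.finrank ℝ K + 1 = Module.finrank ℝ ((Fin 3 → ℝ) × (Fin 3 → ℝ)) := by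
    have hmap : K.map toE3Matrix = h.toSubmodule := by
      rw [Submodule.map_comap_eq, range_toE3Matrix]
      exact inf_eq_right.mpr hsub
    rw [(Submodule.equivMapOfInjective _ toE3Matrix_injective K).finrank_eq, hmap]
    change Module.finrank ℝ h + 1 = _
    simp [h5]
  obtain ⟨f, hf, hker⟩ := K.exists_dual_ker_eq_of_finrank_add_one hK
  refine hf (eq_zero_of_e3Bracket_mem_ker f fun x y hx hy => ?_)
  rw [← LinearMap.mem_ker, hker] at hx hy ⊢
  rw [Submodule.mem_comap, ← lie_toE3Matrix]
  exact h.lie_mem hx hy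
end

section
/- Let h be a Lie subalgebra of e(3) = so(3) ⋉ ℝ³ of dimension 4. Then h is isomorphic (as a Lie algebra, indeed conjugate under the Euclidean group) to the subalgebra spanned by the three translations ∂_x, ∂_y, ∂_z and one rotation x∂_y − y∂_x. -/
/-!
An element of `e(3)` is a pair `(ω, p)` (rotation axis, translation) with bracket
`[(ω, p), (ω', p')] = (ω × ω', ω × p' - ω' × p)`. For a subalgebra `h`, the rotation axes `W`
and the translations `T` it contains satisfy `dim W + dim T = dim h`; `W` is closed under `×`
and `T` is stable under crossing with `W`. A subspace of `ℝ³` closed under `×` of dimension at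
least two is all of `ℝ³`, and no line of `ℝ³` is stable under crossing with every vector. So if
`dim h = 4`, then `T = ℝ³` and `W = ℝu` is a line: `h` consists of all translations and the
rotations about `u`. An orthogonal `Q` taking `u` to the `z`-axis conjugates `h` onto the
standard subalgebra, since `Q [ω]ₓ Qᵀ = [det Q • Q ω]ₓ` where `[ω]ₓ v = ω × v`.
-/

open Matrix

attribute [local instance 100] LieRing.ofAssociativeRing

/-- Auxiliary: entries of a matrix in the standard subalgebra: translations
`∂_x, ∂_y, ∂_z` together with the rotation `x∂_y − y∂_x`. -/
def inStd (M : Matrix (Fin 4) (Fin 4) ℝ) : Prop :=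
  inE3 M ∧ M 0 2 = 0 ∧ M 1 2 = 0

/-- The `4`-dimensional subalgebra of `e(3)` spanned by the translations
`∂_x, ∂_y, ∂_z` and the rotation `x∂_y − y∂_x`. -/
def stdSubalgebra : LieSubalgebra ℝ (Matrix (Fin 4) (Fin 4) ℝ) where
  carrier := {M | inStd M}
  add_mem' := by
    rintro A B ⟨hA, hA02, hA12⟩ ⟨hB, hB02, hB12⟩
    exact ⟨e3.add_mem' hA hB, by simp [Matrix.add_apply, hA02, hB02],
      by simp [Matrix.add_apply, hA12, hB12]⟩
  zero_mem' := ⟨e3.zero_mem', rfl, rfl⟩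
  smul_mem' := by
    rintro c A ⟨hA, hA02, hA12⟩
    exact ⟨e3.smul_mem' c hA, by simp [hA02], by simp [hA12]⟩
  lie_mem' := by
    rintro A B ⟨hA, hA02, hA12⟩ ⟨hB, hB02, hB12⟩
    have hAB := e3.lie_mem' hA hB
    refine ⟨hAB, ?_, ?_⟩ <;>
    · show (A * B - B * A) _ _ = 0
      have hA00 : A 0 0 = 0 := by have := hA.2 0 0 (by decide) (by decide); linarith
      have hB00 : B 0 0 = 0 := by have := hB.2 0 0 (by decide) (by decide); linarith
      have hA11 : A 1 1 = 0 := by have := hA.2 1 1 (by decide) (by decide); linarith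
      have hB11 : B 1 1 = 0 := by have := hB.2 1 1 (by decide) (by decide); linarith
      have hA32 : A 3 2 = 0 := hA.1 2
      have hB32 : B 3 2 = 0 := hB.1 2
      simp only [Matrix.sub_apply, Matrix.mul_apply]
      rw [Fin.sum_univ_four, Fin.sum_univ_four]
      simp [hA00, hB00, hA11, hB11, hA02, hB02, hA12, hB12, hA32, hB32]
  
/-- An element of the Euclidean group inside `GL(4,ℝ)`: last row `(0,0,0,1)` and
orthogonal rotation block. -/
def isEucl (g : Matrix (Fin 4) (Fin 4) ℝ) : Prop :=
  (∀ j : Fin 4, g 3 j = if j = 3 then 1 else 0) ∧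
  (∀ i j : Fin 4, i ≠ 3 → j ≠ 3 →
    (∑ k : Fin 3, g i k.castSucc * g j k.castSucc) = if i = j then 1 else 0)

section CrossMatrix

variable {R : Type*} [CommRing R]

def crossMatrix (ω : Fin 3 → R) : Matrix (Fin 3) (Fin 3) R :=
  !![0, -ω 2, ω 1; ω 2, 0, -ω 0; -ω 1, ω 0, 0]

@[simp]
lemma crossMatrix_mulVec (ω v : Fin 3 → R) : crossMatrix ω *ᵥ v = ω ⨯₃ v := by
  ext i; fin_cases i <;> simp [crossMatrix, cross_apply, mulVec, vecHead, vecTail] <;> ring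

@[simp]
lemma crossMatrix_zero : crossMatrix (0 : Fin 3 → R) = 0 := by
  ext i j
  fin_cases i <;> fin_cases j <;> simp [crossMatrix]

lemma transpose_mulVec_cross_mulVec (M : Matrix (Fin 3) (Fin 3) R) (a b : Fin 3 → R) :
    Mᵀ *ᵥ ((M *ᵥ a) ⨯₃ (M *ᵥ b)) = M.det • (a ⨯₃ b) := by
  ext i; fin_cases i <;>
    simp [cross_apply, mulVec, vec3_dotProduct, det_fin_three, vecHead, vecTail] <;> ring

lemma lie_crossMatrix (ω ω' : Fin 3 → R) :
    ⁅crossMatrix ω, crossMatrix ω'⁆ = crossMatrix (ω ⨯₃ ω') := by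
  rw [ext_iff_mulVec]
  intro v
  simp [Ring.lie_def, sub_mulVec, ← mulVec_mulVec, leibniz_cross ω ω' v]

lemma mul_crossMatrix_mul_transpose {Q : Matrix (Fin 3) (Fin 3) R}
    (hQ : Q ∈ orthogonalGroup (Fin 3) R) (ω : Fin 3 → R) :
    Q * crossMatrix ω * Qᵀ = crossMatrix (Q.det • Q *ᵥ ω) := by
  have hQQ : Q * Qᵀ = 1 := (mem_orthogonalGroup_iff _ _).1 hQ
  have hdet : Q.det * Q.det = 1 := by simpa [det_transpose] using congr_arg det hQQ
  rw [ext_iff_mulVec]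
  intro v
  have key := transpose_mulVec_cross_mulVec Q ω (Qᵀ *ᵥ v)
  rw [mulVec_mulVec, hQQ, one_mulVec] at key
  calc (Q * crossMatrix ω * Qᵀ) *ᵥ v = Q *ᵥ (ω ⨯₃ (Qᵀ *ᵥ v)) := by
        simp only [← mulVec_mulVec, crossMatrix_mulVec]
    _ = Q.det • Q *ᵥ (Q.det • ω ⨯₃ (Qᵀ *ᵥ v)) := by
        rw [mulVec_smul, smul_smul, hdet, one_smul]
    _ = crossMatrix (Q.det • Q *ᵥ ω) *ᵥ v := by
        rw [← key, mulVec_mulVec, hQQ, one_mulVec, crossMatrix_mulVec, map_smul,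
          LinearMap.smul_apply]

end CrossMatrix

section CrossSubspaces

lemma mem_span_singleton_of_cross_eq_zero {F : Type*} [Field F] {u v : Fin 3 → F} (hu : u ≠ 0)
    (huv : u ⨯₃ v = 0) : v ∈ F ∙ u := by
  by_contra hv
  refine crossProduct_ne_zero_iff_linearIndependent.2 ?_ huv
  rw [LinearIndependent.pair_iff' hu]
  exact fun a ha => hv (Submodule.mem_span_singleton.2 ⟨a, ha⟩)

lemma Submodule.eq_top_of_cross_ne_zero {W : Submodule ℝ (Fin 3 → ℝ)}
    (hW : ∀ u ∈ W, ∀ v ∈ W, u ⨯₃ v ∈ W) {u v : Fin 3 → ℝ} (hu : u ∈ W) (hv : v ∈ W)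
    (huv : u ⨯₃ v ≠ 0) : W = ⊤ := by
  -- `det ![u, v, u ⨯₃ v] = (u ⨯₃ v) ⬝ᵥ (u ⨯₃ v)`, so `u`, `v`, `u ⨯₃ v` form a basis.
  have hdet : det ![u, v, u ⨯₃ v] ≠ 0 := by
    rw [← triple_product_eq_det, triple_product_permutation, triple_product_permutation]
    exact fun h => huv (dotProduct_self_eq_zero.1 h)
  have hspan := (linearIndependent_rows_of_det_ne_zero hdet).span_eq_top_of_card_eq_finrank
    (by simp)
  rw [eq_top_iff, ← hspan, Submodule.span_le, Set.range_subset_iff]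
  intro i
  fin_cases i
  exacts [hu, hv, hW u hu v hv]

lemma Submodule.eq_top_of_one_lt_finrank_of_cross_mem {W : Submodule ℝ (Fin 3 → ℝ)}
    (hW : ∀ u ∈ W, ∀ v ∈ W, u ⨯₃ v ∈ W) (hdim : 1 < Module.finrank ℝ W) : W = ⊤ := by
  obtain ⟨u, hu⟩ := W.exists_mem_ne_zero_of_ne_bot
    (fun h => by rw [← Submodule.finrank_eq_zero] at h; omega)
  obtain ⟨v, hind⟩ := exists_linearIndependent_pair_of_one_lt_finrank hdim
    (x := ⟨u, hu.1⟩) (by simpa using hu.2)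
  have hcoe : W.subtype ∘ ![⟨u, hu.1⟩, v] = ![u, (v : Fin 3 → ℝ)] := by
    ext i : 1
    fin_cases i <;> rfl
  have huv : u ⨯₃ (v : Fin 3 → ℝ) ≠ 0 := by
    rw [crossProduct_ne_zero_iff_linearIndependent, ← hcoe]
    exact hind.map' W.subtype W.ker_subtype
  exact W.eq_top_of_cross_ne_zero hW hu.1 v.2 huv

lemma Submodule.finrank_ne_one_of_cross_mem {K : Submodule ℝ (Fin 3 → ℝ)}
    (hK : ∀ ω, ∀ t ∈ K, ω ⨯₃ t ∈ K) : Module.finrank ℝ K ≠ 1 := by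
  intro h1
  obtain ⟨⟨t, htK⟩, ht, hspan⟩ := finrank_eq_one_iff'.1 h1
  have ht : t ≠ 0 := by simpa using ht
  -- `ω ⨯₃ t` is orthogonal to `t`, so it lies on the line `ℝ ∙ t` only if it vanishes.
  have hcross : ∀ ω, ω ⨯₃ t = 0 := by
    intro ω
    obtain ⟨c, hc⟩ := hspan ⟨ω ⨯₃ t, hK ω t htK⟩
    have hc : c • t = ω ⨯₃ t := congr_arg Subtype.val hc
    have hdot : c * (t ⬝ᵥ t) = 0 := by
      rw [← smul_eq_mul, ← smul_dotProduct, hc, dotProduct_comm, dot_cross_self]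
    rw [← hc, (mul_eq_zero.1 hdot).resolve_right (fun h => ht (dotProduct_self_eq_zero.1 h)),
      zero_smul]
  have htop : K = ⊤ := by
    refine eq_top_iff.2 fun ω _ => ?_
    have hω : ω ∈ ℝ ∙ t := mem_span_singleton_of_cross_eq_zero ht
      (by rw [← cross_anticomm, hcross, neg_zero])
    exact (Submodule.span_singleton_le_iff_mem t K).2 htK hω
  rw [htop, finrank_top, Module.finrank_fin_fun] at h1
  omega

end CrossSubspaces

section Homogeneous

variable {R : Type*} [CommRing R]

def affineField (A : Matrix (Fin 3) (Fin 3) R) (p : Fin 3 → R) : Matrix (Fin 4) (Fin 4) R :=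
  !![A 0 0, A 0 1, A 0 2, p 0; A 1 0, A 1 1, A 1 2, p 1; A 2 0, A 2 1, A 2 2, p 2; 0, 0, 0, 0]

def homogLinear (Q : Matrix (Fin 3) (Fin 3) R) : Matrix (Fin 4) (Fin 4) R :=
  !![Q 0 0, Q 0 1, Q 0 2, 0; Q 1 0, Q 1 1, Q 1 2, 0; Q 2 0, Q 2 1, Q 2 2, 0; 0, 0, 0, 1]

lemma homogLinear_mul_homogLinear (P Q : Matrix (Fin 3) (Fin 3) R) :
    homogLinear P * homogLinear Q = homogLinear (P * Q) := by
  ext i j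
  fin_cases i <;> fin_cases j <;>
    simp [homogLinear, mul_apply, Fin.sum_univ_succ]

lemma homogLinear_castSucc (Q : Matrix (Fin 3) (Fin 3) R) (i j : Fin 3) :
    homogLinear Q i.castSucc j.castSucc = Q i j := by
  fin_cases i <;> fin_cases j <;> rfl

lemma homogLinear_one : homogLinear (1 : Matrix (Fin 3) (Fin 3) R) = 1 := by
  ext i j
  fin_cases i <;> fin_cases j <;> simp [homogLinear, one_apply]

lemma homogLinear_mul_affineField_mul (P Q A : Matrix (Fin 3) (Fin 3) R) (p : Fin 3 → R) :
    homogLinear P * affineField A p * homogLinear Q = affineField (P * A * Q) (P *ᵥ p) := by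
  ext i j
  simp only [mul_apply, Fin.sum_univ_four]
  fin_cases i <;> fin_cases j <;>
    simp [homogLinear, affineField, mul_apply, mulVec, dotProduct, Fin.sum_univ_three]

lemma lie_affineField (A B : Matrix (Fin 3) (Fin 3) R) (p q : Fin 3 → R) :
    ⁅affineField A p, affineField B q⁆ = affineField ⁅A, B⁆ (A *ᵥ q - B *ᵥ p) := by
  ext i j
  simp only [Ring.lie_def, Matrix.sub_apply, mul_apply, Fin.sum_univ_four]
  fin_cases i <;> fin_cases j <;>
    simp [affineField, mul_apply, mulVec, dotProduct, Fin.sum_univ_three]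

lemma affineField_add (A B : Matrix (Fin 3) (Fin 3) R) (p q : Fin 3 → R) :
    affineField (A + B) (p + q) = affineField A p + affineField B q := by
  ext i j
  fin_cases i <;> fin_cases j <;> simp [affineField]

lemma affineField_smul (c : R) (A : Matrix (Fin 3) (Fin 3) R) (p : Fin 3 → R) :
    affineField (c • A) (c • p) = c • affineField A p := by
  ext i j
  fin_cases i <;> fin_cases j <;> simp [affineField]

lemma lie_affineField_crossMatrix (ω ω' p p' : Fin 3 → R) :
    ⁅affineField (crossMatrix ω) p, affineField (crossMatrix ω') p'⁆ =
      affineField (crossMatrix (ω ⨯₃ ω')) (ω ⨯₃ p' - ω' ⨯₃ p) := by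
  rw [lie_affineField, lie_crossMatrix, crossMatrix_mulVec, crossMatrix_mulVec]

def translation : (Fin 3 → R) →ₗ[R] Matrix (Fin 4) (Fin 4) R where
  toFun := affineField 0
  map_add' p q := by simpa using affineField_add 0 0 p q
  map_smul' c p := by simpa using affineField_smul c 0 p

def rotPart : Matrix (Fin 4) (Fin 4) R →ₗ[R] Fin 3 → R where
  toFun M := ![M 2 1, M 0 2, M 1 0]
  map_add' M N := by ext i; fin_cases i <;> rfl
  map_smul' c M := by ext i; fin_cases i <;> rfl

@[simp]
lemma rotPart_affineField (ω p : Fin 3 → R) : rotPart (affineField (crossMatrix ω) p) = ω := by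
  ext i; fin_cases i <;> simp [rotPart, affineField, crossMatrix]

end Homogeneous

section EuclideanAlgebra

lemma mem_e3_iff {M : Matrix (Fin 4) (Fin 4) ℝ} :
    M ∈ e3 ↔ ∃ ω p, M = affineField (crossMatrix ω) p := by
  constructor
  · rintro ⟨hrow, hskew⟩
    refine ⟨rotPart M, fun i => M i.castSucc 3, ?_⟩
    have h00 := hskew 0 0 (by decide) (by decide)
    have h11 := hskew 1 1 (by decide) (by decide)
    have h22 := hskew 2 2 (by decide) (by decide)
    have h01 := hskew 0 1 (by decide) (by decide)
    have h12 := hskew 1 2 (by decide) (by decide)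
    have h20 := hskew 2 0 (by decide) (by decide)
    ext i j
    fin_cases i <;> fin_cases j <;>
      simp [affineField, crossMatrix, rotPart, hrow] <;> linarith
  · rintro ⟨ω, p, rfl⟩
    refine ⟨fun j => by fin_cases j <;> rfl, fun i j hi hj => ?_⟩
    fin_cases i <;> fin_cases j <;> simp_all [affineField, crossMatrix]

lemma rotPart_lie {M N : Matrix (Fin 4) (Fin 4) ℝ} (hM : M ∈ e3) (hN : N ∈ e3) :
    rotPart ⁅M, N⁆ = rotPart M ⨯₃ rotPart N := by
  obtain ⟨ω, p, rfl⟩ := mem_e3_iff.1 hM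
  obtain ⟨ω', p', rfl⟩ := mem_e3_iff.1 hN
  simp [lie_affineField_crossMatrix]

lemma lie_translation {M : Matrix (Fin 4) (Fin 4) ℝ} (hM : M ∈ e3) (t : Fin 3 → ℝ) :
    ⁅M, translation t⁆ = translation (rotPart M ⨯₃ t) := by
  obtain ⟨ω, p, rfl⟩ := mem_e3_iff.1 hM
  simpa [translation] using lie_affineField_crossMatrix ω 0 p t

lemma exists_eq_translation {M : Matrix (Fin 4) (Fin 4) ℝ} (hM : M ∈ e3) (h0 : rotPart M = 0) :
    ∃ t, M = translation t := by
  obtain ⟨ω, p, rfl⟩ := mem_e3_iff.1 hM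
  rw [rotPart_affineField] at h0
  exact ⟨p, by simp [translation, h0]⟩

lemma translation_injective : Function.Injective (translation : (Fin 3 → ℝ) →ₗ[ℝ] _) := by
  intro t t' h
  ext i
  fin_cases i
  · simpa [translation, affineField] using congr_fun₂ h 0 3
  · simpa [translation, affineField] using congr_fun₂ h 1 3
  · simpa [translation, affineField] using congr_fun₂ h 2 3

@[simp]
lemma rotPart_translation (t : Fin 3 → ℝ) : rotPart (translation t) = 0 := by
  simpa [translation] using rotPart_affineField (0 : Fin 3 → ℝ) t

end EuclideanAlgebra

section Subalgebras

variable {h : LieSubalgebra ℝ (Matrix (Fin 4) (Fin 4) ℝ)}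

def rotationPart (h : LieSubalgebra ℝ (Matrix (Fin 4) (Fin 4) ℝ)) : Submodule ℝ (Fin 3 → ℝ) :=
  h.toSubmodule.map rotPart

def translationPart (h : LieSubalgebra ℝ (Matrix (Fin 4) (Fin 4) ℝ)) :
    Submodule ℝ (Fin 3 → ℝ) :=
  h.toSubmodule.comap translation

lemma finrank_rotationPart_add_finrank_translationPart (hsub : h ≤ e3) :
    Module.finrank ℝ (rotationPart h) + Module.finrank ℝ (translationPart h) =
      Module.finrank ℝ h := by
  let f := rotPart.domRestrict h.toSubmodule
  let φ : translationPart h →ₗ[ℝ] h.toSubmodule := translation.restrict fun _ ht => ht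
  have hφ : Function.Injective φ := fun t t' htt' =>
    Subtype.ext (translation_injective (congr_arg Subtype.val htt'))
  have hker : LinearMap.range φ = LinearMap.ker f := by
    ext M
    constructor
    · rintro ⟨t, rfl⟩
      exact rotPart_translation t
    · intro hf
      obtain ⟨t, ht⟩ := exists_eq_translation (hsub M.2) hf
      exact ⟨⟨t, show translation t ∈ h from ht ▸ M.2⟩, Subtype.ext ht.symm⟩
  change _ = Module.finrank ℝ h.toSubmodule
  rw [← f.finrank_range_add_finrank_ker, LinearMap.range_domRestrict, ← hker,
    LinearMap.finrank_range_of_inj hφ]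
  rfl

lemma cross_mem_rotationPart (hsub : h ≤ e3) {u v : Fin 3 → ℝ} (hu : u ∈ rotationPart h)
    (hv : v ∈ rotationPart h) : u ⨯₃ v ∈ rotationPart h := by
  obtain ⟨M, hM, rfl⟩ := hu
  obtain ⟨N, hN, rfl⟩ := hv
  exact ⟨⁅M, N⁆, h.lie_mem hM hN, rotPart_lie (hsub hM) (hsub hN)⟩

lemma cross_mem_translationPart (hsub : h ≤ e3) {ω t : Fin 3 → ℝ} (hω : ω ∈ rotationPart h)
    (ht : t ∈ translationPart h) : ω ⨯₃ t ∈ translationPart h := by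
  obtain ⟨M, hM, rfl⟩ := hω
  change translation _ ∈ h
  rw [← lie_translation (hsub hM)]
  exact h.lie_mem hM ht

lemma translationPart_eq_top (hsub : h ≤ e3) (hdim : Module.finrank ℝ h = 4) :
    translationPart h = ⊤ := by
  have hsum := finrank_rotationPart_add_finrank_translationPart hsub
  have hW := (rotationPart h).finrank_le
  simp only [Module.finrank_fin_fun] at hW
  by_contra hne
  have hT := Submodule.finrank_lt hne
  simp only [Module.finrank_fin_fun] at hT
  have hWtop : rotationPart h = ⊤ :=
    (rotationPart h).eq_top_of_one_lt_finrank_of_cross_mem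
      (fun u hu v hv => cross_mem_rotationPart hsub hu hv) (by omega)
  refine (translationPart h).finrank_ne_one_of_cross_mem
    (fun ω t ht => cross_mem_translationPart hsub (hWtop ▸ Submodule.mem_top) ht) ?_
  rw [hWtop, finrank_top, Module.finrank_fin_fun] at hsum
  omega

lemma mem_iff_of_translationPart_eq_top (hsub : h ≤ e3) (hT : translationPart h = ⊤)
    (M : Matrix (Fin 4) (Fin 4) ℝ) : M ∈ h ↔ M ∈ e3 ∧ rotPart M ∈ rotationPart h := by
  refine ⟨fun hM => ⟨hsub hM, M, hM, rfl⟩, ?_⟩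
  rintro ⟨hM, A, hA, hAM⟩
  obtain ⟨t, ht⟩ := exists_eq_translation (e3.sub_mem hM (hsub hA)) (by simp [hAM])
  have htrans : translation t ∈ h := (hT ▸ Submodule.mem_top : t ∈ translationPart h)
  rw [← sub_add_cancel M A, ht]
  exact h.add_mem htrans hA

end Subalgebras

section Axial

def axial (u : Fin 3 → ℝ) : Set (Matrix (Fin 4) (Fin 4) ℝ) :=
  {M | M ∈ e3 ∧ rotPart M ∈ ℝ ∙ u}

lemma exists_mem_iff_mem_axial {h : LieSubalgebra ℝ (Matrix (Fin 4) (Fin 4) ℝ)} (hsub : h ≤ e3)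
    (hdim : Module.finrank ℝ h = 4) : ∃ u ≠ 0, ∀ M, M ∈ h ↔ M ∈ axial u := by
  have hT := translationPart_eq_top hsub hdim
  have hW : Module.finrank ℝ (rotationPart h) = 1 := by
    have := finrank_rotationPart_add_finrank_translationPart hsub
    rw [hT, finrank_top, Module.finrank_fin_fun, hdim] at this
    omega
  obtain ⟨u, hu, hu0⟩ := (rotationPart h).exists_mem_ne_zero_of_ne_bot
    (fun hbot => by rw [hbot, finrank_bot] at hW; omega)
  refine ⟨u, hu0, fun M => ?_⟩
  rw [mem_iff_of_translationPart_eq_top hsub hT,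
    eq_span_singleton_of_mem_of_finrank_eq_one hW hu hu0]
  rfl

lemma axial_smul {c : ℝ} (hc : c ≠ 0) (u : Fin 3 → ℝ) : axial (c • u) = axial u := by
  simp only [axial, Submodule.span_singleton_smul_eq hc.isUnit]

lemma mem_stdSubalgebra_iff_mem_axial {M : Matrix (Fin 4) (Fin 4) ℝ} :
    M ∈ stdSubalgebra ↔ M ∈ axial (Pi.single 2 1) := by
  change inE3 M ∧ M 0 2 = 0 ∧ M 1 2 = 0 ↔ M ∈ e3 ∧ _
  refine and_congr_right fun hM => ?_
  obtain ⟨ω, p, rfl⟩ := mem_e3_iff.1 hM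
  simp only [rotPart_affineField, Submodule.mem_span_singleton]
  constructor
  · rintro ⟨h1, h0⟩
    refine ⟨ω 2, ?_⟩
    ext i
    fin_cases i <;> simp_all [affineField, crossMatrix]
  · rintro ⟨a, rfl⟩
    simp [affineField, crossMatrix]

variable {Q : Matrix (Fin 3) (Fin 3) ℝ}

lemma homogLinear_conj_mem_axial (hQ : Q ∈ orthogonalGroup (Fin 3) ℝ) {u : Fin 3 → ℝ}
    {M : Matrix (Fin 4) (Fin 4) ℝ} (hM : M ∈ axial u) :
    homogLinear Q * M * homogLinear Qᵀ ∈ axial (Q *ᵥ u) := by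
  obtain ⟨hM, hMu⟩ := hM
  obtain ⟨ω, p, rfl⟩ := mem_e3_iff.1 hM
  rw [rotPart_affineField] at hMu
  obtain ⟨c, rfl⟩ := Submodule.mem_span_singleton.1 hMu
  rw [homogLinear_mul_affineField_mul, mul_crossMatrix_mul_transpose hQ]
  refine ⟨mem_e3_iff.2 ⟨_, _, rfl⟩, Submodule.mem_span_singleton.2 ⟨Q.det * c, ?_⟩⟩
  rw [rotPart_affineField, mulVec_smul, smul_smul]

lemma homogLinear_conj_mem_axial_iff (hQ : Q ∈ orthogonalGroup (Fin 3) ℝ) {u : Fin 3 → ℝ}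
    {M : Matrix (Fin 4) (Fin 4) ℝ} :
    homogLinear Q * M * homogLinear Qᵀ ∈ axial (Q *ᵥ u) ↔ M ∈ axial u := by
  refine ⟨fun hM => ?_, homogLinear_conj_mem_axial hQ⟩
  have hQ' : Qᵀ ∈ orthogonalGroup (Fin 3) ℝ := transpose_mem_unitaryGroup_iff.2 hQ
  have hQQ : Qᵀ * Q = 1 := (mem_orthogonalGroup_iff' _ _).1 hQ
  have hM' := homogLinear_conj_mem_axial hQ' hM
  rwa [transpose_transpose, mulVec_mulVec, hQQ, one_mulVec, ← mul_assoc, ← mul_assoc,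
    homogLinear_mul_homogLinear, hQQ, homogLinear_one, one_mul, mul_assoc,
    homogLinear_mul_homogLinear, hQQ, homogLinear_one, mul_one] at hM'

end Axial

lemma isEucl_homogLinear {Q : Matrix (Fin 3) (Fin 3) ℝ} (hQ : Q ∈ orthogonalGroup (Fin 3) ℝ) :
    isEucl (homogLinear Q) := by
  have hQQ : ∀ i j, ∑ k, Q i k * Q j k = if i = j then 1 else 0 := fun i j => by
    simpa [mul_apply, one_apply] using congr_fun₂ ((mem_orthogonalGroup_iff _ _).1 hQ) i j
  refine ⟨fun j => by fin_cases j <;> simp [homogLinear], fun i j hi hj => ?_⟩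
  obtain ⟨i, rfl⟩ := Fin.exists_castSucc_eq.2 hi
  obtain ⟨j, rfl⟩ := Fin.exists_castSucc_eq.2 hj
  simp only [homogLinear_castSucc, Fin.castSucc_inj, hQQ]

lemma exists_orthogonal_mulVec_eq_smul_single {u : Fin 3 → ℝ} (hu : u ≠ 0) :
    ∃ Q ∈ orthogonalGroup (Fin 3) ℝ, ∃ c : ℝ, c ≠ 0 ∧ Q *ᵥ u = c • Pi.single 2 1 := by
  set x : EuclideanSpace ℝ (Fin 3) := WithLp.toLp 2 u
  have hx : x ≠ 0 := by simpa [x] using hu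
  have hunit : Orthonormal ℝ (({2} : Set (Fin 3)).domRestrict fun _ => ‖x‖⁻¹ • x) := by
    rw [orthonormal_iff_ite]
    intro i j
    rw [Subsingleton.elim i j, if_pos rfl, real_inner_self_eq_norm_sq, Set.domRestrict_apply,
      norm_smul, norm_inv, norm_norm, inv_mul_cancel₀ (norm_ne_zero_iff.2 hx), one_pow]
  -- The rows of `Q` are an orthonormal basis whose last vector is `u / ‖u‖`.
  obtain ⟨b, hb⟩ := hunit.exists_orthonormalBasis_extension_of_card_eq (by simp)
  have hinner : ∀ i j, inner ℝ (b i) (b j) = if i = j then 1 else 0 :=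
    orthonormal_iff_ite.1 b.orthonormal
  refine ⟨Matrix.of fun i j => b i j, ?_, ‖x‖, norm_ne_zero_iff.2 hx, ?_⟩
  · rw [mem_orthogonalGroup_iff]
    ext i j
    simpa [mul_apply, one_apply, PiLp.inner_apply, mul_comm, eq_comm] using hinner j i
  · have hb2 : x = ‖x‖ • b 2 := by
      rw [hb 2 rfl, smul_smul, mul_inv_cancel₀ (norm_ne_zero_iff.2 hx), one_smul]
    ext i
    have := congr_arg (inner ℝ (b i)) hb2
    rw [inner_smul_right, hinner, PiLp.inner_apply] at this
    simp only [mulVec, dotProduct, of_apply, Pi.smul_apply, Pi.single_apply, smul_eq_mul]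
    convert this using 1
    simp [x, mul_comm]

lemma LieSubalgebra.nonempty_lieEquiv_of_conj {R A : Type*} [CommRing R] [Ring A] [Algebra R A]
    {h k : LieSubalgebra R A} (g : Aˣ) (hg : ∀ M, M ∈ h ↔ (g : A) * M * ((g⁻¹ : Aˣ) : A) ∈ k) :
    Nonempty (h ≃ₗ⁅R⁆ k) := by
  let e := (MulSemiringAction.toAlgEquiv R A (ConjAct.toConjAct g)).toLieEquiv
  have he : ∀ M, e M = g * M * ((g⁻¹ : Aˣ) : A) := fun M => ConjAct.units_smul_def _ M
  have hmap : ((h.map e.toLieHom : LieSubalgebra R A) : Set A) = k := by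
    ext M
    simp only [SetLike.mem_coe, LieSubalgebra.mem_map]
    refine ⟨?_, fun hM => ⟨((g⁻¹ : Aˣ) : A) * M * g, ?_, ?_⟩⟩
    · rintro ⟨N, hN, rfl⟩
      rw [LieEquiv.coe_toLieHom, he]
      exact (hg N).1 hN
    · rw [hg]
      simpa [mul_assoc] using hM
    · rw [LieEquiv.coe_toLieHom, he]
      simp [mul_assoc]
  exact ⟨(h.equivMapOfInjective e.toLieHom e.injective).trans (LieEquiv.ofEq _ _ hmap)⟩

/-- Every `4`-dimensional Lie subalgebra of `e(3)` is conjugate under the Euclidean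
group (in particular isomorphic as a Lie algebra) to the subalgebra spanned by the
translations `∂_x, ∂_y, ∂_z` and the rotation `x∂_y − y∂_x`. -/
theorem stmt10 (h : LieSubalgebra ℝ (Matrix (Fin 4) (Fin 4) ℝ)) (hsub : h ≤ e3)
    (hdim : Module.finrank ℝ ↥h = 4) :
    (∃ g : (Matrix (Fin 4) (Fin 4) ℝ)ˣ, isEucl (g : Matrix (Fin 4) (Fin 4) ℝ) ∧
      ∀ M, M ∈ h ↔
        (g : Matrix (Fin 4) (Fin 4) ℝ) * M * ((g⁻¹ : _) : Matrix (Fin 4) (Fin 4) ℝ)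
          ∈ stdSubalgebra) ∧
    Nonempty (↥h ≃ₗ⁅ℝ⁆ ↥stdSubalgebra) := by
  obtain ⟨u, hu, hhu⟩ := exists_mem_iff_mem_axial hsub hdim
  obtain ⟨Q, hQ, c, hc, hQu⟩ := exists_orthogonal_mulVec_eq_smul_single hu
  let g : (Matrix (Fin 4) (Fin 4) ℝ)ˣ :=
    { val := homogLinear Q
      inv := homogLinear Qᵀ
      val_inv := by rw [homogLinear_mul_homogLinear, (mem_orthogonalGroup_iff _ _).1 hQ,
        homogLinear_one]
      inv_val := by rw [homogLinear_mul_homogLinear, (mem_orthogonalGroup_iff' _ _).1 hQ,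
        homogLinear_one] }
  have hconj : ∀ M, M ∈ h ↔ (g : Matrix (Fin 4) (Fin 4) ℝ) * M * ((g⁻¹ : _) : Matrix _ _ ℝ)
      ∈ stdSubalgebra := fun M => by
    rw [hhu, mem_stdSubalgebra_iff_mem_axial, ← axial_smul hc (Pi.single 2 1), ← hQu]
    exact (homogLinear_conj_mem_axial_iff hQ).symm
  exact ⟨⟨g, isEucl_homogLinear hQ, hconj⟩, LieSubalgebra.nonempty_lieEquiv_of_conj g hconj⟩
end
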